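/- Fix integers N ≥ 1, M ≥ 0, n ≥ 1, and set L = 2^{Nd}. Define h_k as the indicator of the union over j ∈ {0,…,2^{k-N}-1}^d of cubes ∏_i [j_i 2^{-k+N}, j_i 2^{-k+N}+2^{-k-M}] for N ≤ k ≤ L. Then ∑_{N ≤ k_1 ≤ k_2 ≤ … ≤ k_n ≤ L} ∫ ∏_{i=1}^n h_{k_i}(x) dx ≤ C(n, d, M), where C(n,d,M) is independent of N. -/

import Mathlib

open MeasureTheory Finset

/-- The support of `h_k`: union over `j ∈ {0,…,2^{k-N}-1}^d` of the cubes
`∏_i [j_i 2^{-k+N}, j_i 2^{-k+N} + 2^{-k-M}]`. -/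
def cubeUnion (d N M k : ℕ) : Set (EuclideanSpace ℝ (Fin d)) :=
  ⋃ (j : Fin d → ℕ) (_ : ∀ i, j i < 2 ^ (k - N)),
    (WithLp.ofLp : EuclideanSpace ℝ (Fin d) → (Fin d → ℝ)) ⁻¹' Set.univ.pi fun i =>
      Set.Icc ((j i : ℝ) * (2 : ℝ) ^ ((N : ℤ) - (k : ℤ)))
        ((j i : ℝ) * (2 : ℝ) ^ ((N : ℤ) - (k : ℤ)) + (2 : ℝ) ^ (-(k : ℤ) - (M : ℤ)))

/-! In every coordinate `cubeUnion d N M k` is the comb `intervalUnion N M k`: teeth of width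
`2^(-k-M)` at spacing `2^(N-k)`. Hence the integral of a product of indicators is the
`d`-th power of the length of an intersection of combs. An interval of length `ℓ` meets at most
`(ℓ + w) / s + 1` teeth of a comb of width `w` and spacing `s`, and the first comb has
`2^(k-N)` teeth, so peeling off the combs one at a time bounds the length of
`⋂ i, intervalUnion N M (k i)` by
`2^(-(N+M)) * ∏ i, 2 * (2^(k i - k (i+1)) + 2^(-(N+M)))`.
On a monotone chain these factors depend only on the gaps `k (i+1) - k i`, so the sum over chains
splits into a factor `2^(N d) * 2^(-(N+M) d) ≤ 1` for the starting point and, for each gap, a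
sum over `s` of `(2 * (2^(-s) + 2^(-(N+M))))^d`, which is at most `3 * 4^d`. -/

open scoped ENNReal

def gridIntervals (s w : ℝ) (J : Finset ℕ) : Set ℝ :=
  ⋃ j ∈ J, Set.Icc (j * s) (j * s + w)

lemma volume_gridIntervals_inter_le (s w : ℝ) (J : Finset ℕ) {R : Set ℝ} {c : ℝ≥0∞}
    (hR : ∀ a, volume (Set.Icc a (a + w) ∩ R) ≤ c) :
    volume (gridIntervals s w J ∩ R) ≤ #J * c := by
  rw [gridIntervals, Set.iUnion₂_inter]
  calc volume (⋃ j ∈ J, Set.Icc (j * s) (j * s + w) ∩ R)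
      ≤ ∑ j ∈ J, volume (Set.Icc (j * s) (j * s + w) ∩ R) := measure_biUnion_finset_le _ _
    _ ≤ ∑ _j ∈ J, c := sum_le_sum fun j _ => hR _
    _ = #J * c := by rw [sum_const, nsmul_eq_mul]

lemma card_le_of_forall_mul_mem_Icc {s u v : ℝ} (hs : 0 < s) (huv : u ≤ v) {J : Finset ℕ}
    (hJ : ∀ j ∈ J, (j : ℝ) * s ∈ Set.Icc u v) : (#J : ℝ) ≤ (v - u) / s + 1 := by
  rcases J.eq_empty_or_nonempty with rfl | hne
  · simp only [card_empty, Nat.cast_zero]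
    have : 0 ≤ (v - u) / s := div_nonneg (sub_nonneg.2 huv) hs.le
    linarith
  set j₀ := J.min' hne
  set t := ⌊(v - u) / s⌋₊
  have hsub : J ⊆ Icc j₀ (j₀ + t) := by
    intro j hj
    have hj₀j : j₀ ≤ j := J.min'_le j hj
    have hgap : ((j - j₀ : ℕ) : ℝ) ≤ (v - u) / s := by
      rw [le_div_iff₀ hs, Nat.cast_sub hj₀j, sub_mul]
      linarith [(hJ j hj).2, (hJ j₀ (J.min'_mem hne)).1]
    have := Nat.le_floor hgap
    exact mem_Icc.2 ⟨hj₀j, by omega⟩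
  have hcard : #J ≤ t + 1 := by
    have := card_le_card hsub
    rw [Nat.card_Icc] at this
    omega
  calc (#J : ℝ) ≤ t + 1 := by exact_mod_cast hcard
    _ ≤ (v - u) / s + 1 := by
      gcongr
      exact Nat.floor_le (div_nonneg (sub_nonneg.2 huv) hs.le)

lemma volume_Icc_inter_gridIntervals_inter_le {s w ℓ : ℝ} (hs : 0 < s) (hw : 0 ≤ w)
    (hℓ : 0 ≤ ℓ) (J : Finset ℕ) {R : Set ℝ} {c : ℝ≥0∞}
    (hR : ∀ a, volume (Set.Icc a (a + w) ∩ R) ≤ c) (a : ℝ) :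
    volume (Set.Icc a (a + ℓ) ∩ (gridIntervals s w J ∩ R)) ≤
      ENNReal.ofReal ((ℓ + w) / s + 1) * c := by
  set J' := J.filter fun j : ℕ => (j : ℝ) * s ∈ Set.Icc (a - w) (a + ℓ)
  have hcover :
      Set.Icc a (a + ℓ) ∩ (gridIntervals s w J ∩ R) ⊆ gridIntervals s w J' ∩ R := by
    rintro x ⟨⟨hax, hxa⟩, hxJ, hxR⟩
    simp only [gridIntervals, Set.mem_iUnion, Set.mem_Icc, exists_prop] at hxJ
    obtain ⟨j, hj, hjx, hxj⟩ := hxJ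
    refine ⟨Set.mem_biUnion (mem_filter.2 ⟨hj, ?_, ?_⟩) ⟨hjx, hxj⟩, hxR⟩ <;> linarith
  have hcard : (#J' : ℝ) ≤ (ℓ + w) / s + 1 := by
    have := card_le_of_forall_mul_mem_Icc hs (by linarith : a - w ≤ a + ℓ)
      (J := J') fun j hj => (mem_filter.1 hj).2
    rwa [show a + ℓ - (a - w) = ℓ + w by ring] at this
  calc _ ≤ volume (gridIntervals s w J' ∩ R) := measure_mono hcover
    _ ≤ #J' * c := volume_gridIntervals_inter_le s w J' hR
    _ ≤ ENNReal.ofReal ((ℓ + w) / s + 1) * c := by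
      gcongr
      rw [← ENNReal.ofReal_natCast]
      exact ENNReal.ofReal_le_ofReal hcard

def intervalUnion (N M k : ℕ) : Set ℝ :=
  gridIntervals ((2 : ℝ) ^ ((N : ℤ) - k)) ((2 : ℝ) ^ (-(k : ℤ) - M)) (range (2 ^ (k - N)))

lemma cubeUnion_eq_preimage_pi (d N M k : ℕ) :
    cubeUnion d N M k =
      (WithLp.ofLp : EuclideanSpace ℝ (Fin d) → (Fin d → ℝ)) ⁻¹'
        Set.univ.pi fun _ => intervalUnion N M k := by
  ext x
  simp only [cubeUnion, intervalUnion, gridIntervals, Set.mem_iUnion, Set.mem_preimage,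
    Set.mem_univ_pi, mem_range, exists_prop]
  exact ⟨fun ⟨j, hj, hx⟩ i => ⟨j i, hj i, hx i⟩, fun h => by
    choose j hj hx using h
    exact ⟨j, hj, hx⟩⟩

noncomputable def gapFactor (N M p k : ℕ) : ℝ :=
  2 * ((2 : ℝ) ^ ((p : ℤ) - k) + (2 : ℝ) ^ (-((N : ℤ) + M)))

lemma gapFactor_nonneg (N M p k : ℕ) : 0 ≤ gapFactor N M p k := by
  unfold gapFactor; positivity

lemma gapFactor_of_le (N M : ℕ) {p k : ℕ} (hpk : p ≤ k) :
    gapFactor N M p k = 2 * ((1 / 2 : ℝ) ^ (k - p) + (2 : ℝ) ^ (-((N : ℤ) + M))) := by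
  rw [gapFactor, one_div, inv_pow, ← zpow_natCast, ← zpow_neg, Nat.cast_sub hpk, neg_sub]

lemma gridCount_mul_width_le_gapFactor (N M p k : ℕ) :
    (((2 : ℝ) ^ (-(p : ℤ) - M) + (2 : ℝ) ^ (-(k : ℤ) - M)) /
        (2 : ℝ) ^ ((N : ℤ) - k) + 1) * (2 : ℝ) ^ (-(k : ℤ) - M) ≤
      (2 : ℝ) ^ (-(p : ℤ) - M) * gapFactor N M p k := by
  have h2 : (2 : ℝ) ≠ 0 := two_ne_zero
  have hpN :
      (2 : ℝ) ^ (-(p : ℤ) - M) / (2 : ℝ) ^ ((N : ℤ) - k) * (2 : ℝ) ^ (-(k : ℤ) - M) =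
        (2 : ℝ) ^ (-(p : ℤ) - M) * (2 : ℝ) ^ (-((N : ℤ) + M)) := by
    rw [div_mul_eq_mul_div, mul_div_assoc, ← zpow_sub₀ h2]; ring_nf
  have hkN : (2 : ℝ) ^ (-(k : ℤ) - M) / (2 : ℝ) ^ ((N : ℤ) - k) ≤ 1 := by
    rw [← zpow_sub₀ h2]; exact zpow_le_one_of_nonpos₀ one_le_two (by omega)
  have hpk : (2 : ℝ) ^ (-(k : ℤ) - M) =
      (2 : ℝ) ^ (-(p : ℤ) - M) * (2 : ℝ) ^ ((p : ℤ) - k) := by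
    rw [← zpow_add₀ h2]; ring_nf
  calc _ = (2 : ℝ) ^ (-(p : ℤ) - M) * (2 : ℝ) ^ (-((N : ℤ) + M)) +
        ((2 : ℝ) ^ (-(k : ℤ) - M) / (2 : ℝ) ^ ((N : ℤ) - k) + 1) *
          (2 : ℝ) ^ (-(k : ℤ) - M) := by
        rw [add_div, add_mul, add_mul, hpN]; ring
    _ ≤ (2 : ℝ) ^ (-(p : ℤ) - M) * (2 : ℝ) ^ (-((N : ℤ) + M)) +
        (1 + 1) * (2 : ℝ) ^ (-(k : ℤ) - M) := by gcongr
    _ ≤ (2 : ℝ) ^ (-(p : ℤ) - M) * gapFactor N M p k := by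
        rw [gapFactor, hpk]
        have : 0 ≤ (2 : ℝ) ^ (-(p : ℤ) - M) * (2 : ℝ) ^ (-((N : ℤ) + M)) := by positivity
        linarith

lemma volume_Icc_inter_iInter_intervalUnion_le (N M : ℕ) :
    ∀ (m : ℕ) (k : Fin (m + 1) → ℕ) (a : ℝ),
      volume (Set.Icc a (a + (2 : ℝ) ^ (-(k 0 : ℤ) - M)) ∩
          ⋂ i : Fin m, intervalUnion N M (k i.succ)) ≤
        ENNReal.ofReal ((2 : ℝ) ^ (-(k 0 : ℤ) - M) *
          ∏ i : Fin m, gapFactor N M (k i.castSucc) (k i.succ))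
  | 0, k, a => by simp [Real.volume_Icc]
  | m + 1, k, a => by
    have hsplit : (⋂ i : Fin (m + 1), intervalUnion N M (k i.succ)) =
        intervalUnion N M (k 1) ∩ ⋂ i : Fin m, intervalUnion N M (k i.succ.succ) := by
      ext x; simp [Fin.forall_fin_succ]
    have ih := volume_Icc_inter_iInter_intervalUnion_le N M m (fun i => k i.succ)
    rw [hsplit, Fin.prod_univ_succ]
    refine (volume_Icc_inter_gridIntervals_inter_le (by positivity) (by positivity)
      (by positivity) _ ih a).trans ?_
    rw [← ENNReal.ofReal_mul (by positivity)]
    refine ENNReal.ofReal_le_ofReal ?_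
    have hP : 0 ≤ ∏ i : Fin m, gapFactor N M (k i.succ.castSucc) (k i.succ.succ) :=
      prod_nonneg fun i _ => gapFactor_nonneg ..
    calc _ = ((((2 : ℝ) ^ (-(k 0 : ℤ) - M) + (2 : ℝ) ^ (-(k 1 : ℤ) - M)) /
            (2 : ℝ) ^ ((N : ℤ) - k 1) + 1) * (2 : ℝ) ^ (-(k 1 : ℤ) - M)) *
          ∏ i : Fin m, gapFactor N M (k i.succ.castSucc) (k i.succ.succ) := by
          simp only [Fin.succ_zero_eq_one, Fin.succ_castSucc]; ring
      _ ≤ ((2 : ℝ) ^ (-(k 0 : ℤ) - M) * gapFactor N M (k 0) (k 1)) *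
          ∏ i : Fin m, gapFactor N M (k i.succ.castSucc) (k i.succ.succ) :=
        mul_le_mul_of_nonneg_right (gridCount_mul_width_le_gapFactor N M _ _) hP
      _ = _ := by simp only [Fin.castSucc_zero, Fin.succ_zero_eq_one]; ring

lemma volume_iInter_intervalUnion_le {N M m : ℕ} (k : Fin (m + 1) → ℕ) (hk : N ≤ k 0) :
    volume (⋂ i, intervalUnion N M (k i)) ≤
      ENNReal.ofReal ((2 : ℝ) ^ (-((N : ℤ) + M)) *
        ∏ i : Fin m, gapFactor N M (k i.castSucc) (k i.succ)) := by
  have hsplit : (⋂ i, intervalUnion N M (k i)) =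
      intervalUnion N M (k 0) ∩ ⋂ i : Fin m, intervalUnion N M (k i.succ) := by
    ext x; simp [Fin.forall_fin_succ]
  have hcount : ((2 ^ (k 0 - N) : ℕ) : ℝ) * (2 : ℝ) ^ (-(k 0 : ℤ) - M) =
      (2 : ℝ) ^ (-((N : ℤ) + M)) := by
    rw [Nat.cast_pow, Nat.cast_ofNat, ← zpow_natCast, ← zpow_add₀ two_ne_zero,
      Nat.cast_sub hk]
    ring_nf
  rw [hsplit, intervalUnion]
  refine (volume_gridIntervals_inter_le _ _ _
    (volume_Icc_inter_iInter_intervalUnion_le N M m k)).trans ?_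
  rw [card_range, ← ENNReal.ofReal_natCast, ← ENNReal.ofReal_mul (Nat.cast_nonneg _),
    ← mul_assoc, hcount]

lemma integral_prod_indicator_cubeUnion_le {d N M m : ℕ} (k : Fin (m + 1) → ℕ)
    (hk : N ≤ k 0) :
    ∫ x : EuclideanSpace ℝ (Fin d),
        ∏ i, (cubeUnion d N M (k i)).indicator (fun _ => (1 : ℝ)) x ≤
      ((2 : ℝ) ^ (-((N : ℤ) + M)) *
        ∏ i : Fin m, gapFactor N M (k i.castSucc) (k i.succ)) ^ d := by
  have hT : MeasurableSet (⋂ i, intervalUnion N M (k i)) :=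
    .iInter fun i => (range _).measurableSet_biUnion fun _ _ => measurableSet_Icc
  have hinter : (⋂ i, cubeUnion d N M (k i)) =
      (WithLp.ofLp : EuclideanSpace ℝ (Fin d) → (Fin d → ℝ)) ⁻¹'
        Set.univ.pi fun _ => ⋂ i, intervalUnion N M (k i) := by
    ext x; simp [cubeUnion_eq_preimage_pi, forall_comm (α := Fin d)]
  have hprod : (fun x => ∏ i, (cubeUnion d N M (k i)).indicator (fun _ => (1 : ℝ)) x) =
      (⋂ i, cubeUnion d N M (k i)).indicator 1 := by
    ext x; rw [prod_indicator_const_apply, ← Pi.one_def, one_pow]; simp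
  have hvol :
      volume (⋂ i, cubeUnion d N M (k i)) = volume (⋂ i, intervalUnion N M (k i)) ^ d := by
    rw [hinter, (PiLp.volume_preserving_ofLp (Fin d)).measure_preimage
      (MeasurableSet.univ_pi fun _ => hT).nullMeasurableSet, volume_pi_pi, prod_const, card_fin]
  rw [hprod, integral_indicator_one (hinter ▸ (MeasurableSet.univ_pi fun _ => hT).preimage
    (WithLp.measurable_ofLp _ _)), measureReal_def, hvol, ENNReal.toReal_pow]
  gcongr
  exact ENNReal.toReal_le_of_le_ofReal
    (mul_nonneg (by positivity) (prod_nonneg fun i _ => gapFactor_nonneg ..))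
    (volume_iInter_intervalUnion_le k hk)

lemma sum_monotone_prod_gap_le {a b m : ℕ} (G : ℕ → ℝ) (hG : ∀ s, 0 ≤ G s) :
    ∑ k ∈ (Fintype.piFinset fun _ : Fin (m + 1) => Icc a b).filter
        (fun k : Fin (m + 1) → ℕ => ∀ i j : Fin (m + 1), i ≤ j → k i ≤ k j),
      ∏ i : Fin m, G (k i.succ - k i.castSucc) ≤
    (b + 1 - a : ℕ) * (∑ s ∈ range (b + 1 - a), G s) ^ m := by
  set chains := (Fintype.piFinset fun _ : Fin (m + 1) => Icc a b).filter
    (fun k : Fin (m + 1) → ℕ => ∀ i j : Fin (m + 1), i ≤ j → k i ≤ k j)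
  let ψ : (Fin (m + 1) → ℕ) → ℕ × (Fin m → ℕ) :=
    fun k => (k 0, fun i => k i.succ - k i.castSucc)
  have hmono : ∀ k ∈ chains, ∀ i : Fin m, k i.castSucc ≤ k i.succ := fun k hk i =>
    (mem_filter.1 hk).2 _ _ (Fin.castSucc_le_succ i)
  have hinj : Set.InjOn ψ chains := by
    intro k hk k' hk' hkk'
    simp only [ψ, Prod.mk.injEq, funext_iff] at hkk'
    funext i
    induction i using Fin.induction with
    | zero => exact hkk'.1
    | succ i ih => have := hmono k hk i; have := hmono k' hk' i; have := hkk'.2 i; omega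
  have hmaps : chains.image ψ ⊆ Icc a b ×ˢ Fintype.piFinset fun _ => range (b + 1 - a) := by
    simp only [subset_iff, mem_image, mem_product, Fintype.mem_piFinset, mem_range, mem_Icc]
    rintro _ ⟨k, hk, rfl⟩
    have hab : ∀ i, a ≤ k i ∧ k i ≤ b := fun i =>
      mem_Icc.1 (Fintype.mem_piFinset.1 (mem_filter.1 hk).1 i)
    refine ⟨hab 0, fun i => ?_⟩
    have := hab i.succ
    have := hab i.castSucc
    dsimp only [ψ]
    omega
  calc _ = ∑ t ∈ chains.image ψ, ∏ i, G (t.2 i) := (sum_image hinj).symm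
    _ ≤ ∑ t ∈ Icc a b ×ˢ Fintype.piFinset (fun _ => range (b + 1 - a)), ∏ i, G (t.2 i) :=
      sum_le_sum_of_subset_of_nonneg hmaps fun t _ _ => prod_nonneg fun i _ => hG _
    _ = _ := by
      rw [sum_product]
      dsimp only
      rw [← prod_univ_sum, sum_const, prod_const, card_fin, Nat.card_Icc, nsmul_eq_mul]

lemma sum_range_two_mul_half_pow_add_pow_le {d K : ℕ} (hd : 1 ≤ d) {r : ℝ} (hr : 0 ≤ r)
    (hK : K * r ^ d ≤ 1) :
    ∑ s ∈ range K, (2 * ((1 / 2 : ℝ) ^ s + r)) ^ d ≤ 3 * 4 ^ d := by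
  have hterm (s : ℕ) :
      (2 * ((1 / 2 : ℝ) ^ s + r)) ^ d ≤ 4 ^ d * ((1 / 2 : ℝ) ^ s + r ^ d) := by
    have hx : ((1 / 2 : ℝ) ^ s) ^ d ≤ (1 / 2 : ℝ) ^ s :=
      pow_le_of_le_one (by positivity) (pow_le_one₀ (by norm_num) (by norm_num)) (by omega)
    calc (2 * ((1 / 2 : ℝ) ^ s + r)) ^ d
        ≤ 2 ^ d * (2 ^ (d - 1) * (((1 / 2 : ℝ) ^ s) ^ d + r ^ d)) := by
          rw [mul_pow]; gcongr; exact add_pow_le (by positivity) hr d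
      _ ≤ 2 ^ d * (2 ^ d * ((1 / 2 : ℝ) ^ s + r ^ d)) := by
          gcongr
          · exact one_le_two
          · omega
      _ = 4 ^ d * ((1 / 2 : ℝ) ^ s + r ^ d) := by rw [← mul_assoc, ← mul_pow]; norm_num
  calc _ ≤ ∑ s ∈ range K, 4 ^ d * ((1 / 2 : ℝ) ^ s + r ^ d) := sum_le_sum fun s _ => hterm s
    _ = 4 ^ d * (∑ s ∈ range K, (1 / 2 : ℝ) ^ s + K * r ^ d) := by
      rw [← mul_sum, sum_add_distrib, sum_const, card_range, nsmul_eq_mul]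
    _ ≤ 4 ^ d * (2 + 1) := by gcongr; exact sum_geometric_two_le K
    _ = 3 * 4 ^ d := by ring

lemma integral_prod_indicator_cubeUnion_le_of_monotone {d N M m : ℕ} (k : Fin (m + 1) → ℕ)
    (hk : N ≤ k 0) (hmono : ∀ i j : Fin (m + 1), i ≤ j → k i ≤ k j) :
    ∫ x : EuclideanSpace ℝ (Fin d),
        ∏ i, (cubeUnion d N M (k i)).indicator (fun _ => (1 : ℝ)) x ≤
      ((2 : ℝ) ^ (-((N : ℤ) + M))) ^ d * ∏ i : Fin m,
        (2 * ((1 / 2 : ℝ) ^ (k i.succ - k i.castSucc) + (2 : ℝ) ^ (-((N : ℤ) + M)))) ^ d := by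
  refine (integral_prod_indicator_cubeUnion_le k hk).trans_eq ?_
  rw [mul_pow, ← prod_pow]
  congr 1
  exact prod_congr rfl fun i _ => by
    rw [gapFactor_of_le N M (hmono _ _ (Fin.castSucc_le_succ i))]

lemma card_Icc_mul_pow_le_one {N M d : ℕ} (hN : 1 ≤ N) :
    ((2 ^ (N * d) + 1 - N : ℕ) : ℝ) * ((2 : ℝ) ^ (-((N : ℤ) + M))) ^ d ≤ 1 := by
  have hcard : ((2 ^ (N * d) + 1 - N : ℕ) : ℝ) ≤ (2 : ℝ) ^ ((N * d : ℕ) : ℤ) := by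
    rw [zpow_natCast]
    exact_mod_cast Nat.sub_le_iff_le_add.2 (Nat.add_le_add_left hN _)
  calc _ ≤ (2 : ℝ) ^ ((N * d : ℕ) : ℤ) * ((2 : ℝ) ^ (-((N : ℤ) + M))) ^ d := by gcongr
    _ = (2 : ℝ) ^ (-((M * d : ℕ) : ℤ)) := by
      rw [← zpow_natCast _ d, ← zpow_mul, ← zpow_add₀ two_ne_zero]; push_cast; ring_nf
    _ ≤ 1 := zpow_le_one_of_nonpos₀ one_le_two (by omega)

/-- `∑_{N ≤ k_1 ≤ … ≤ k_n ≤ 2^{Nd}} ∫ ∏_i h_{k_i} ≤ C(n,d,M)`, uniformly in `N`. -/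
theorem cubeUnion_product_sum_bounded (n d M : ℕ) (hn : 1 ≤ n) (hd : 1 ≤ d) :
    ∃ C : ℝ, ∀ N : ℕ, 1 ≤ N →
      ∑ k ∈ (Fintype.piFinset fun _ : Fin n => Finset.Icc N (2 ^ (N * d))).filter
          (fun k : Fin n → ℕ => ∀ i j : Fin n, i ≤ j → k i ≤ k j),
        (∫ x : EuclideanSpace ℝ (Fin d),
            ∏ i, (cubeUnion d N M (k i)).indicator (fun _ => (1 : ℝ)) x)
      ≤ C := by
  obtain ⟨m, rfl⟩ : ∃ m, n = m + 1 := ⟨n - 1, by omega⟩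
  refine ⟨(3 * 4 ^ d) ^ m, fun N hN => ?_⟩
  set r : ℝ := (2 : ℝ) ^ (-((N : ℤ) + M))
  set K := 2 ^ (N * d) + 1 - N
  have hr : 0 ≤ r := by positivity
  have hK : (K : ℝ) * r ^ d ≤ 1 := card_Icc_mul_pow_le_one hN
  calc _ ≤ ∑ k ∈ (Fintype.piFinset fun _ : Fin (m + 1) => Icc N (2 ^ (N * d))).filter
          (fun k : Fin (m + 1) → ℕ => ∀ i j : Fin (m + 1), i ≤ j → k i ≤ k j),
        r ^ d * ∏ i : Fin m, (2 * ((1 / 2 : ℝ) ^ (k i.succ - k i.castSucc) + r)) ^ d := by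
        refine sum_le_sum fun k hk => ?_
        have hchain := mem_filter.1 hk
        exact integral_prod_indicator_cubeUnion_le_of_monotone k
          (mem_Icc.1 (Fintype.mem_piFinset.1 hchain.1 0)).1 hchain.2
    _ ≤ r ^ d * (K * (∑ s ∈ range K, (2 * ((1 / 2 : ℝ) ^ s + r)) ^ d) ^ m) := by
        rw [← mul_sum]
        gcongr
        exact sum_monotone_prod_gap_le (fun s => (2 * ((1 / 2 : ℝ) ^ s + r)) ^ d)
          fun s => by positivity
    _ = (K * r ^ d) * (∑ s ∈ range K, (2 * ((1 / 2 : ℝ) ^ s + r)) ^ d) ^ m := by ring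
    _ ≤ 1 * (3 * 4 ^ d) ^ m := by
        gcongr
        exact sum_range_two_mul_half_pow_add_pow_le hd hr hK
    _ = (3 * 4 ^ d) ^ m := one_mul _
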